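/- Let G be a toroidal grid diagram of size n, and define the X-Maslov grading of a generator x by M_𝕏(x) = J(x−𝕏, x−𝕏) + 1 (the Maslov grading with the set 𝕏 playing the role of 𝕆). Then M_𝕏(x^UR) = 1 − n and M_𝕏(x^LL) = 1 − n. -/
import Mathlib


open Finset

noncomputable section

open scoped Classical

/-- A formal rational-coefficient combination of points in the plane. -/
abbrev PtComb := (ℝ × ℝ) →₀ ℚ

/-- `I(A,B)`: the number of pairs `(a, b) ∈ A × B` with `a₁ < b₁` and `a₂ < b₂`,
extended bilinearly to formal combinations of finite point sets. -/
def Ifun (f g : PtComb) : ℚ :=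
  ∑ p ∈ f.support, ∑ q ∈ g.support,
    if p.1 < q.1 ∧ p.2 < q.2 then f p * g q else 0

/-- `J(A,B) = (I(A,B) + I(B,A))/2`. -/
def Jfun (f g : PtComb) : ℚ := (Ifun f g + Ifun g f) / 2

/-- A toroidal grid diagram of size `n`: a pair of permutations `σX`, `σO` of
`{0, …, n-1}` with `σX i ≠ σO i` for all `i`. -/
structure Grid (n : ℕ) where
  σX : Equiv.Perm (Fin n)
  σO : Equiv.Perm (Fin n)
  disj : ∀ i, σX i ≠ σO i

namespace Grid

variable {n : ℕ}

/-- `G` represents a knot: the permutation `σO⁻¹ ∘ σX` has a single orbit,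
i.e. it is an `n`-cycle. -/
def RepKnot (G : Grid n) : Prop :=
  ∀ i j : Fin n, ∃ k : ℕ, ((G.σO⁻¹ * G.σX) ^ k) i = j

/-- The `X`-marking of column `i`, at the planar point `(i + 1/2, σX i + 1/2)`. -/
def Xpt (G : Grid n) (i : Fin n) : ℝ × ℝ :=
  (((i : ℕ) : ℝ) + 1/2, ((G.σX i : ℕ) : ℝ) + 1/2)

/-- The `O`-marking of column `i`, at the planar point `(i + 1/2, σO i + 1/2)`. -/
def Opt (G : Grid n) (i : Fin n) : ℝ × ℝ :=
  (((i : ℕ) : ℝ) + 1/2, ((G.σO i : ℕ) : ℝ) + 1/2)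

/-- The set `𝕏` of `X`-markings, as a formal point combination. -/
def XX (G : Grid n) : PtComb := ∑ i : Fin n, Finsupp.single (G.Xpt i) 1

/-- The set `𝕆` of `O`-markings, as a formal point combination. -/
def OO (G : Grid n) : PtComb := ∑ i : Fin n, Finsupp.single (G.Opt i) 1

/-- The point set `{(i, x i)}` of a generator `x`, as a formal point combination. -/
def pts (x : Equiv.Perm (Fin n)) : PtComb :=
  ∑ i : Fin n, Finsupp.single (((i : ℕ) : ℝ), ((x i : ℕ) : ℝ)) 1

/-- The Maslov grading `M(x) = J(x − 𝕆, x − 𝕆) + 1`. -/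
def M (G : Grid n) (x : Equiv.Perm (Fin n)) : ℚ :=
  Jfun (pts x - G.OO) (pts x - G.OO) + 1

/-- The `X`-Maslov grading `M_𝕏(x) = J(x − 𝕏, x − 𝕏) + 1`. -/
def MX (G : Grid n) (x : Equiv.Perm (Fin n)) : ℚ :=
  Jfun (pts x - G.XX) (pts x - G.XX) + 1

/-- The Alexander grading `A(x) = J(x − (𝕏+𝕆)/2, 𝕏 − 𝕆) − (n−1)/2`. -/
def A (G : Grid n) (x : Equiv.Perm (Fin n)) : ℚ :=
  Jfun (pts x - (2 : ℚ)⁻¹ • (G.XX + G.OO)) (G.XX - G.OO) - ((n : ℚ) - 1) / 2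

/-- The canonical generator `x^LL`, whose points are the lower-left corners of the
`X`-marked squares. -/
def xLL (G : Grid n) : Equiv.Perm (Fin n) := G.σX

/-- The canonical generator `x^UR`, `x^UR(i) = σX((i−1) mod n) + 1 (mod n)`, whose points
are the upper-right corners of the `X`-marked squares (reduced mod `n`). -/
def xUR [NeZero n] (G : Grid n) : Equiv.Perm (Fin n) where
  toFun i := G.σX (i - 1) + 1
  invFun i := G.σX.symm (i - 1) + 1
  left_inv i := by simp
  right_inv i := by simp

end Grid

/-! ### Auxiliary lemmas -/

section Aux

lemma Ifun_eq_sum (f g : PtComb) {S T : Finset (ℝ×ℝ)} (hS : f.support ⊆ S) (hT : g.support ⊆ T) :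
    Ifun f g = ∑ p ∈ S, ∑ q ∈ T, if p.1 < q.1 ∧ p.2 < q.2 then f p * g q else 0 := by
  unfold Ifun
  have inner : ∀ p : ℝ × ℝ, (∑ q ∈ g.support, if p.1 < q.1 ∧ p.2 < q.2 then f p * g q else 0)
      = ∑ q ∈ T, if p.1 < q.1 ∧ p.2 < q.2 then f p * g q else 0 := by
    intro p
    refine Finset.sum_subset hT ?_
    intro q _ hq
    simp [Finsupp.notMem_support_iff.1 hq]
  calc (∑ p ∈ f.support, ∑ q ∈ g.support, if p.1 < q.1 ∧ p.2 < q.2 then f p * g q else 0)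
      = ∑ p ∈ f.support, ∑ q ∈ T, if p.1 < q.1 ∧ p.2 < q.2 then f p * g q else 0 :=
        Finset.sum_congr rfl fun p _ => inner p
    _ = _ := by
        refine Finset.sum_subset hS ?_
        intro p _ hp
        simp [Finsupp.notMem_support_iff.1 hp]

lemma Ifun_add_left (f g h : PtComb) : Ifun (f + g) h = Ifun f h + Ifun g h := by
  have hS : (f + g).support ⊆ f.support ∪ g.support := Finsupp.support_add
  rw [Ifun_eq_sum (f+g) h hS (subset_refl _),
      Ifun_eq_sum f h (Finset.subset_union_left) (subset_refl _),
      Ifun_eq_sum g h (Finset.subset_union_right) (subset_refl _),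
      ← Finset.sum_add_distrib]
  refine Finset.sum_congr rfl fun p _ => ?_
  rw [← Finset.sum_add_distrib]
  refine Finset.sum_congr rfl fun q _ => ?_
  split_ifs <;> simp [add_mul]

lemma Ifun_add_right (f g h : PtComb) : Ifun f (g + h) = Ifun f g + Ifun f h := by
  have hS : (g + h).support ⊆ g.support ∪ h.support := Finsupp.support_add
  rw [Ifun_eq_sum f (g+h) (subset_refl _) hS,
      Ifun_eq_sum f g (subset_refl _) (Finset.subset_union_left),
      Ifun_eq_sum f h (subset_refl _) (Finset.subset_union_right),
      ← Finset.sum_add_distrib]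
  refine Finset.sum_congr rfl fun p _ => ?_
  rw [← Finset.sum_add_distrib]
  refine Finset.sum_congr rfl fun q _ => ?_
  split_ifs <;> simp [mul_add]

lemma Ifun_zero_left (g : PtComb) : Ifun 0 g = 0 := by simp [Ifun]

lemma Ifun_zero_right (f : PtComb) : Ifun f 0 = 0 := by simp [Ifun]

lemma Ifun_neg_left (f g : PtComb) : Ifun (-f) g = - Ifun f g := by
  have h := Ifun_add_left f (-f) g
  simp [Ifun_zero_left] at h
  linarith [h]

lemma Ifun_neg_right (f g : PtComb) : Ifun f (-g) = - Ifun f g := by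
  have h := Ifun_add_right f g (-g)
  simp [Ifun_zero_right] at h
  linarith [h]

lemma Ifun_sub_sub (f g h k : PtComb) :
    Ifun (f - g) (h - k) = Ifun f h - Ifun f k - Ifun g h + Ifun g k := by
  rw [sub_eq_add_neg f g, sub_eq_add_neg h k, Ifun_add_left, Ifun_add_right, Ifun_add_right,
    Ifun_neg_left, Ifun_neg_left, Ifun_neg_right, Ifun_neg_right]
  ring

lemma Ifun_sum_left {ι : Type*} (s : Finset ι) (f : ι → PtComb) (g : PtComb) :
    Ifun (∑ i ∈ s, f i) g = ∑ i ∈ s, Ifun (f i) g := by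
  refine Finset.induction_on s (by simp [Ifun_zero_left]) ?_
  intro a s' ha ih
  rw [Finset.sum_insert ha, Ifun_add_left, ih, Finset.sum_insert ha]

lemma Ifun_sum_right {ι : Type*} (s : Finset ι) (f : PtComb) (g : ι → PtComb) :
    Ifun f (∑ i ∈ s, g i) = ∑ i ∈ s, Ifun f (g i) := by
  refine Finset.induction_on s (by simp [Ifun_zero_right]) ?_
  intro a s' ha ih
  rw [Finset.sum_insert ha, Ifun_add_right, ih, Finset.sum_insert ha]

lemma Ifun_single_single (p q : ℝ × ℝ) (a b : ℚ) :
    Ifun (Finsupp.single p a) (Finsupp.single q b)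
      = if p.1 < q.1 ∧ p.2 < q.2 then a * b else 0 := by
  rw [Ifun_eq_sum _ _ (Finsupp.support_single_subset) (Finsupp.support_single_subset)]
  simp [Finsupp.single_apply]

lemma Ifun_points {m : ℕ} (u v : Fin m → ℝ × ℝ) :
    Ifun (∑ i : Fin m, Finsupp.single (u i) 1) (∑ j : Fin m, Finsupp.single (v j) 1)
      = ∑ i : Fin m, ∑ j : Fin m,
          if (u i).1 < (v j).1 ∧ (u i).2 < (v j).2 then (1:ℚ) else 0 := by
  rw [Ifun_sum_left]
  refine Finset.sum_congr rfl fun i _ => ?_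
  rw [Ifun_sum_right]
  refine Finset.sum_congr rfl fun j _ => ?_
  rw [Ifun_single_single]
  norm_num

lemma lt_half_iff (a b : ℕ) : ((a:ℝ)) < (b:ℝ) + 1/2 ↔ a ≤ b := by
  constructor
  · intro h
    by_contra hc
    push_neg at hc
    have : (b:ℝ) + 1 ≤ a := by exact_mod_cast Nat.succ_le_of_lt hc
    linarith
  · intro h
    have : (a:ℝ) ≤ b := by exact_mod_cast h
    linarith

lemma half_lt_iff (a b : ℕ) : (a:ℝ) + 1/2 < (b:ℝ) ↔ a < b := by
  constructor
  · intro h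
    by_contra hc
    push_neg at hc
    have : (b:ℝ) ≤ a := by exact_mod_cast hc
    linarith
  · intro h
    have : (a:ℝ) + 1 ≤ b := by exact_mod_cast Nat.succ_le_of_lt h
    linarith

lemma half_half_iff (a b : ℕ) : (a:ℝ) + 1/2 < (b:ℝ) + 1/2 ↔ a < b := by
  constructor
  · intro h
    exact_mod_cast show (a:ℝ) < b by linarith
  · intro h
    have : (a:ℝ) < b := by exact_mod_cast h
    linarith

lemma MX_eq {n : ℕ} (G : Grid n) (x : Equiv.Perm (Fin n)) :
    G.MX x = (∑ i : Fin n, ∑ j : Fin n,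
        ((if (i:ℕ) < (j:ℕ) ∧ ((x i : ℕ)) < ((x j : ℕ)) then (1:ℚ) else 0)
         - (if (i:ℕ) ≤ (j:ℕ) ∧ ((x i : ℕ)) ≤ ((G.σX j : ℕ)) then (1:ℚ) else 0)
         - (if (i:ℕ) < (j:ℕ) ∧ ((G.σX i : ℕ)) < ((x j : ℕ)) then (1:ℚ) else 0)
         + (if (i:ℕ) < (j:ℕ) ∧ ((G.σX i : ℕ)) < ((G.σX j : ℕ)) then (1:ℚ) else 0))) + 1 := by
  have hJ : Jfun (Grid.pts x - G.XX) (Grid.pts x - G.XX)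
      = Ifun (Grid.pts x - G.XX) (Grid.pts x - G.XX) := by
    unfold Jfun; ring
  unfold Grid.MX
  rw [hJ, Ifun_sub_sub]
  unfold Grid.pts Grid.XX
  rw [Ifun_points, Ifun_points, Ifun_points, Ifun_points]
  simp only [Grid.Xpt, Nat.cast_lt, lt_half_iff, half_lt_iff, half_half_iff,
    Finset.sum_sub_distrib, Finset.sum_add_distrib]

set_option maxHeartbeats 4000000 in
lemma key_term (n a b sa sb a' b' sa' sb' : ℕ) (hn : 2 ≤ n)
    (ha : a < n) (hb : b < n) (hsa : sa < n) (hsb : sb < n)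
    (ha' : (a + 1 = n ∧ a' = 0) ∨ (a + 1 < n ∧ a' = a + 1))
    (hb' : (b + 1 = n ∧ b' = 0) ∨ (b + 1 < n ∧ b' = b + 1))
    (hsa' : (sa + 1 = n ∧ sa' = 0) ∨ (sa + 1 < n ∧ sa' = sa + 1))
    (hsb' : (sb + 1 = n ∧ sb' = 0) ∨ (sb + 1 < n ∧ sb' = sb + 1))
    (hinj : a = b ↔ sa = sb) :
    (if a' < b' ∧ sa' < sb' then (1:ℚ) else 0)
    - (if a' ≤ b ∧ sa' ≤ sb then 1 else 0)
    - (if a < b' ∧ sa < sb' then 1 else 0)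
    + (if a < b ∧ sa < sb then 1 else 0)
    = - (if sa = n-1 ∧ b = n-1 ∧ ¬ a = n-1 then (1:ℚ) else 0)
      - (if a = n-1 ∧ sb = n-1 ∧ ¬ b = n-1 then 1 else 0)
      - (if a = n-1 ∧ b = n-1 ∧ sa = n-1 then 1 else 0)
      - (if a = b ∧ ¬ a = n-1 ∧ ¬ sa = n-1 then 1 else 0) := by
  split_ifs <;> first | (exfalso; omega) | norm_num

lemma w_term (n a b sa sb cv : ℕ)
    (hca : sa = n-1 ↔ a = cv) (hcb : sb = n-1 ↔ b = cv) (hinj : a = b ↔ sa = sb) :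
    - (if sa = n-1 ∧ b = n-1 ∧ ¬ a = n-1 then (1:ℚ) else 0)
    - (if a = n-1 ∧ sb = n-1 ∧ ¬ b = n-1 then 1 else 0)
    - (if a = n-1 ∧ b = n-1 ∧ sa = n-1 then 1 else 0)
    - (if a = b ∧ ¬ a = n-1 ∧ ¬ sa = n-1 then 1 else 0)
    = - (if b = (if a = n-1 then cv else if sa = n-1 then n-1 else a) then (1:ℚ) else 0) := by
  split_ifs <;> first | (exfalso; omega) | norm_num

lemma lL_term (a b sa sb : ℕ) (hinj : a = b ↔ sa = sb) :
    (if a < b ∧ sa < sb then (1:ℚ) else 0)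
    - (if a ≤ b ∧ sa ≤ sb then 1 else 0)
    - (if a < b ∧ sa < sb then 1 else 0)
    + (if a < b ∧ sa < sb then 1 else 0)
    = - (if b = a then (1:ℚ) else 0) := by
  split_ifs <;> first | (exfalso; omega) | norm_num

lemma sum_val_eq {n : ℕ} (k : ℕ) (hk : k < n) :
    ∑ j : Fin n, (if (j:ℕ) = k then (1:ℚ) else 0) = 1 := by
  calc (∑ j : Fin n, (if (j:ℕ) = k then (1:ℚ) else 0))
      = ∑ j : Fin n, (if j = (⟨k, hk⟩ : Fin n) then (1:ℚ) else 0) := by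
        refine Finset.sum_congr rfl fun j _ => ?_
        refine if_congr ⟨fun h => Fin.ext h, fun h => by rw [h]⟩ rfl rfl
    _ = 1 := by simp

lemma neg_one_sum {n : ℕ} : ∑ _i : Fin n, (-1 : ℚ) = -(n:ℚ) := by
  simp

end Aux

set_option maxHeartbeats 2000000 in
/-- For a toroidal grid diagram `G` of size `n`, the `X`-Maslov grading
(the Maslov grading with `𝕏` playing the role of `𝕆`) of both canonical generators equals
`1 − n`. -/
theorem xMaslov_canonical {n : ℕ} [NeZero n] (hn : 2 ≤ n) (G : Grid n) :
    G.MX G.xUR = 1 - (n : ℚ) ∧ G.MX G.xLL = 1 - (n : ℚ) := by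
  have hval1 : ((1 : Fin n) : ℕ) = 1 := by
    rw [Fin.val_one']; exact Nat.mod_eq_of_lt (by omega)
  have hadd : ∀ i : Fin n, ((i:ℕ) + 1 = n ∧ ((i+1 : Fin n):ℕ) = 0)
      ∨ ((i:ℕ) + 1 < n ∧ ((i+1 : Fin n):ℕ) = (i:ℕ) + 1) := by
    intro i
    have hv : ((i+1 : Fin n):ℕ) = ((i:ℕ) + 1) % n := by rw [Fin.val_add, hval1]
    rcases Nat.lt_or_ge ((i:ℕ)+1) n with h | h
    · exact Or.inr ⟨h, by rw [hv, Nat.mod_eq_of_lt h]⟩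
    · have he : (i:ℕ) + 1 = n := by have := i.isLt; omega
      exact Or.inl ⟨he, by rw [hv, he, Nat.mod_self]⟩
  have hinj : ∀ i j : Fin n, (i:ℕ) = (j:ℕ) ↔ ((G.σX i : ℕ)) = ((G.σX j : ℕ)) := by
    intro i j
    rw [← Fin.ext_iff, ← Fin.ext_iff]
    exact (EmbeddingLike.apply_eq_iff_eq G.σX).symm
  have hL : n - 1 < n := by omega
  set L : Fin n := ⟨n-1, hL⟩ with hLdef
  set c : Fin n := G.σX.symm L with hcdef
  have hca : ∀ i : Fin n, ((G.σX i : ℕ) = n - 1 ↔ (i:ℕ) = (c:ℕ)) := by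
    intro i
    constructor
    · intro h
      have : G.σX i = L := Fin.ext h
      rw [(Equiv.apply_eq_iff_eq_symm_apply G.σX).1 this]
    · intro h
      have : i = c := Fin.ext h
      rw [this, hcdef]
      simp [hLdef]
  constructor
  · -- the x^UR case
    rw [MX_eq]
    have hx : ∀ i : Fin n, G.xUR (i+1) = G.σX i + 1 := by
      intro i
      show G.σX ((i+1) - 1) + 1 = G.σX i + 1
      rw [add_sub_cancel_right]
    have ee : ∀ f : Fin n → ℚ, (∑ i : Fin n, f (i+1)) = ∑ i : Fin n, f i := fun f =>
      Fintype.sum_equiv (Equiv.addRight 1) _ _ (fun _ => rfl)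
    have key : (∑ i : Fin n, ∑ j : Fin n,
        ((if (i:ℕ) < (j:ℕ) ∧ ((G.xUR i : ℕ)) < ((G.xUR j : ℕ)) then (1:ℚ) else 0)
         - (if (i:ℕ) ≤ (j:ℕ) ∧ ((G.xUR i : ℕ)) ≤ ((G.σX j : ℕ)) then (1:ℚ) else 0)
         - (if (i:ℕ) < (j:ℕ) ∧ ((G.σX i : ℕ)) < ((G.xUR j : ℕ)) then (1:ℚ) else 0)
         + (if (i:ℕ) < (j:ℕ) ∧ ((G.σX i : ℕ)) < ((G.σX j : ℕ)) then (1:ℚ) else 0)))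
        = -(n:ℚ) := by
      have step1 : (∑ i : Fin n, ∑ j : Fin n,
          ((if (i:ℕ) < (j:ℕ) ∧ ((G.xUR i : ℕ)) < ((G.xUR j : ℕ)) then (1:ℚ) else 0)
           - (if (i:ℕ) ≤ (j:ℕ) ∧ ((G.xUR i : ℕ)) ≤ ((G.σX j : ℕ)) then (1:ℚ) else 0)
           - (if (i:ℕ) < (j:ℕ) ∧ ((G.σX i : ℕ)) < ((G.xUR j : ℕ)) then (1:ℚ) else 0)
           + (if (i:ℕ) < (j:ℕ) ∧ ((G.σX i : ℕ)) < ((G.σX j : ℕ)) then (1:ℚ) else 0)))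
          = ∑ i : Fin n, ∑ j : Fin n,
          ((if ((i+1 : Fin n):ℕ) < ((j+1 : Fin n):ℕ)
                ∧ ((G.xUR (i+1) : ℕ)) < ((G.xUR (j+1) : ℕ)) then (1:ℚ) else 0)
           - (if ((i+1 : Fin n):ℕ) ≤ (j:ℕ)
                ∧ ((G.xUR (i+1) : ℕ)) ≤ ((G.σX j : ℕ)) then (1:ℚ) else 0)
           - (if (i:ℕ) < ((j+1 : Fin n):ℕ)
                ∧ ((G.σX i : ℕ)) < ((G.xUR (j+1) : ℕ)) then (1:ℚ) else 0)
           + (if (i:ℕ) < (j:ℕ) ∧ ((G.σX i : ℕ)) < ((G.σX j : ℕ)) then (1:ℚ) else 0)) := by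
        simp only [Finset.sum_sub_distrib, Finset.sum_add_distrib]
        congr 1
        congr 1
        congr 1
        · -- reindex both coordinates
          refine Eq.symm ?_
          calc (∑ i : Fin n, ∑ j : Fin n,
              (if ((i+1 : Fin n):ℕ) < ((j+1 : Fin n):ℕ)
                ∧ ((G.xUR (i+1) : ℕ)) < ((G.xUR (j+1) : ℕ)) then (1:ℚ) else 0))
              = ∑ i : Fin n, ∑ j : Fin n,
              (if ((i+1 : Fin n):ℕ) < ((j : Fin n):ℕ)
                ∧ ((G.xUR (i+1) : ℕ)) < ((G.xUR j : ℕ)) then (1:ℚ) else 0) :=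
                Finset.sum_congr rfl fun i _ => ee (fun j => if ((i+1 : Fin n):ℕ) < (j:ℕ)
                  ∧ ((G.xUR (i+1) : ℕ)) < ((G.xUR j : ℕ)) then (1:ℚ) else 0)
            _ = _ := ee (fun i => ∑ j : Fin n, if (i:ℕ) < (j:ℕ)
                  ∧ ((G.xUR i : ℕ)) < ((G.xUR j : ℕ)) then (1:ℚ) else 0)
        · -- reindex left coordinate
          exact (ee (fun i => ∑ j : Fin n, if (i:ℕ) ≤ (j:ℕ)
            ∧ ((G.xUR i : ℕ)) ≤ ((G.σX j : ℕ)) then (1:ℚ) else 0)).symm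
        · -- reindex right coordinate
          refine Eq.symm (Finset.sum_congr rfl fun (i : Fin n) _ => ?_)
          exact ee (fun j : Fin n => if (i:ℕ) < (j:ℕ)
            ∧ ((G.σX i : ℕ)) < ((G.xUR j : ℕ)) then (1:ℚ) else 0)
      rw [step1]
      have step2 : ∀ i j : Fin n,
          ((if ((i+1 : Fin n):ℕ) < ((j+1 : Fin n):ℕ)
                ∧ ((G.xUR (i+1) : ℕ)) < ((G.xUR (j+1) : ℕ)) then (1:ℚ) else 0)
           - (if ((i+1 : Fin n):ℕ) ≤ (j:ℕ)
                ∧ ((G.xUR (i+1) : ℕ)) ≤ ((G.σX j : ℕ)) then (1:ℚ) else 0)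
           - (if (i:ℕ) < ((j+1 : Fin n):ℕ)
                ∧ ((G.σX i : ℕ)) < ((G.xUR (j+1) : ℕ)) then (1:ℚ) else 0)
           + (if (i:ℕ) < (j:ℕ) ∧ ((G.σX i : ℕ)) < ((G.σX j : ℕ)) then (1:ℚ) else 0))
          = - (if (j:ℕ) = (if (i:ℕ) = n-1 then (c:ℕ)
                else if (G.σX i : ℕ) = n-1 then n-1 else (i:ℕ)) then (1:ℚ) else 0) := by
        intro i j
        rw [hx i, hx j]
        refine Eq.trans (key_term n (i:ℕ) (j:ℕ) ((G.σX i : ℕ)) ((G.σX j : ℕ))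
          ((i+1 : Fin n):ℕ) ((j+1 : Fin n):ℕ) ((G.σX i + 1 : Fin n):ℕ) ((G.σX j + 1 : Fin n):ℕ)
          hn i.isLt j.isLt (G.σX i).isLt (G.σX j).isLt
          (hadd i) (hadd j) (hadd (G.σX i)) (hadd (G.σX j)) (hinj i j)) ?_
        exact w_term n (i:ℕ) (j:ℕ) ((G.σX i : ℕ)) ((G.σX j : ℕ)) (c:ℕ)
          (hca i) (hca j) (hinj i j)
      calc (∑ i : Fin n, ∑ j : Fin n,
          ((if ((i+1 : Fin n):ℕ) < ((j+1 : Fin n):ℕ)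
                ∧ ((G.xUR (i+1) : ℕ)) < ((G.xUR (j+1) : ℕ)) then (1:ℚ) else 0)
           - (if ((i+1 : Fin n):ℕ) ≤ (j:ℕ)
                ∧ ((G.xUR (i+1) : ℕ)) ≤ ((G.σX j : ℕ)) then (1:ℚ) else 0)
           - (if (i:ℕ) < ((j+1 : Fin n):ℕ)
                ∧ ((G.σX i : ℕ)) < ((G.xUR (j+1) : ℕ)) then (1:ℚ) else 0)
           + (if (i:ℕ) < (j:ℕ) ∧ ((G.σX i : ℕ)) < ((G.σX j : ℕ)) then (1:ℚ) else 0)))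
          = ∑ i : Fin n, ∑ j : Fin n,
            - (if (j:ℕ) = (if (i:ℕ) = n-1 then (c:ℕ)
                else if (G.σX i : ℕ) = n-1 then n-1 else (i:ℕ)) then (1:ℚ) else 0) :=
            Finset.sum_congr rfl fun i _ => Finset.sum_congr rfl fun j _ => step2 i j
        _ = ∑ _i : Fin n, (-1 : ℚ) := by
            refine Finset.sum_congr rfl fun i _ => ?_
            rw [Finset.sum_neg_distrib]
            have hWlt : (if (i:ℕ) = n-1 then (c:ℕ)
                else if (G.σX i : ℕ) = n-1 then n-1 else (i:ℕ)) < n := by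
              split_ifs
              · exact c.isLt
              · omega
              · exact i.isLt
            rw [sum_val_eq _ hWlt]
        _ = -(n:ℚ) := neg_one_sum
    rw [key]
    ring
  · -- the x^LL case
    rw [MX_eq]
    have hcoe : ∀ i : Fin n, G.xLL i = G.σX i := fun _ => rfl
    simp only [hcoe]
    have step2 : ∀ i j : Fin n,
        ((if (i:ℕ) < (j:ℕ) ∧ ((G.σX i : ℕ)) < ((G.σX j : ℕ)) then (1:ℚ) else 0)
         - (if (i:ℕ) ≤ (j:ℕ) ∧ ((G.σX i : ℕ)) ≤ ((G.σX j : ℕ)) then (1:ℚ) else 0)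
         - (if (i:ℕ) < (j:ℕ) ∧ ((G.σX i : ℕ)) < ((G.σX j : ℕ)) then (1:ℚ) else 0)
         + (if (i:ℕ) < (j:ℕ) ∧ ((G.σX i : ℕ)) < ((G.σX j : ℕ)) then (1:ℚ) else 0))
        = - (if (j:ℕ) = (i:ℕ) then (1:ℚ) else 0) := fun i j =>
      lL_term (i:ℕ) (j:ℕ) ((G.σX i : ℕ)) ((G.σX j : ℕ)) (hinj i j)
    have key : (∑ i : Fin n, ∑ j : Fin n,
        ((if (i:ℕ) < (j:ℕ) ∧ ((G.σX i : ℕ)) < ((G.σX j : ℕ)) then (1:ℚ) else 0)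
         - (if (i:ℕ) ≤ (j:ℕ) ∧ ((G.σX i : ℕ)) ≤ ((G.σX j : ℕ)) then (1:ℚ) else 0)
         - (if (i:ℕ) < (j:ℕ) ∧ ((G.σX i : ℕ)) < ((G.σX j : ℕ)) then (1:ℚ) else 0)
         + (if (i:ℕ) < (j:ℕ) ∧ ((G.σX i : ℕ)) < ((G.σX j : ℕ)) then (1:ℚ) else 0)))
        = -(n:ℚ) := by
      calc (∑ i : Fin n, ∑ j : Fin n,
          ((if (i:ℕ) < (j:ℕ) ∧ ((G.σX i : ℕ)) < ((G.σX j : ℕ)) then (1:ℚ) else 0)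
           - (if (i:ℕ) ≤ (j:ℕ) ∧ ((G.σX i : ℕ)) ≤ ((G.σX j : ℕ)) then (1:ℚ) else 0)
           - (if (i:ℕ) < (j:ℕ) ∧ ((G.σX i : ℕ)) < ((G.σX j : ℕ)) then (1:ℚ) else 0)
           + (if (i:ℕ) < (j:ℕ) ∧ ((G.σX i : ℕ)) < ((G.σX j : ℕ)) then (1:ℚ) else 0)))
          = ∑ i : Fin n, ∑ j : Fin n, - (if (j:ℕ) = (i:ℕ) then (1:ℚ) else 0) :=
            Finset.sum_congr rfl fun i _ => Finset.sum_congr rfl fun j _ => step2 i j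
        _ = ∑ _i : Fin n, (-1 : ℚ) := by
            refine Finset.sum_congr rfl fun i _ => ?_
            rw [Finset.sum_neg_distrib, sum_val_eq _ i.isLt]
        _ = -(n:ℚ) := neg_one_sum
    rw [key]
    ring
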